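/- arXiv:1006.4253 — 7 statements merged into one kernel-verified Lean document; each statement's English description precedes it below -/
import Mathlib

section
/- Let G be a finite simple graph and A, B ⊆ V(G). Write G = G* ⊔ G^{AB}, where G^{AB} is the union of the connected components of G containing at least one vertex of A and at least one vertex of B, and G* is the union of the remaining components. Then Δ(G,A,B) = σ(G*₋A ⊔ G*₋B) · Δ(G^{AB}, A∩V(G^{AB}), B∩V(G^{AB})), where Δ(H,A,B) = σ(H₋A)·σ(H₋B) − σ(H)·σ(H₋A₋B). -/
open scoped Classical

/-- The number of independent vertex sets of `G` avoiding the set `W`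
(i.e. `σ(G₋W)`, the number of independent sets of `G` with `W` deleted). -/
noncomputable def sigmaDel {V : Type*} [Fintype V] (G : SimpleGraph V) (W : Set V) : ℕ :=
  (Finset.univ.filter
    (fun s : Finset V => (∀ v ∈ s, v ∉ W) ∧ ∀ u ∈ s, ∀ v ∈ s, ¬ G.Adj u v)).card

/-- The number of independent vertex sets of `G`. -/
noncomputable def sigmaG {V : Type*} [Fintype V] (G : SimpleGraph V) : ℕ :=
  sigmaDel G ∅

/-- The disjoint union of two simple graphs. -/
def disjUnion {V₁ V₂ : Type*} (G₁ : SimpleGraph V₁) (G₂ : SimpleGraph V₂) :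
    SimpleGraph (V₁ ⊕ V₂) where
  Adj x y :=
    match x, y with
    | Sum.inl a, Sum.inl b => G₁.Adj a b
    | Sum.inr a, Sum.inr b => G₂.Adj a b
    | _, _ => False
  symm := ⟨by rintro (a | a) (b | b) h <;> simp_all [SimpleGraph.adj_comm]⟩
  loopless := ⟨by rintro (a | a) h <;> simp_all⟩

/-- `Δ(G, A, B) = σ(G₋A)·σ(G₋B) − σ(G)·σ(G₋A₋B)`, as an integer. -/
noncomputable def deltaG {V : Type*} [Fintype V] (G : SimpleGraph V) (A B : Set V) : ℤ :=
  (sigmaDel G A : ℤ) * sigmaDel G B - (sigmaG G : ℤ) * sigmaDel G (A ∪ B)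

/-! Independent sets split along any union `S` of connected components:
`σ(G₋W) = σ(G₋(Sᶜ ∪ W)) · σ(G₋(S ∪ W))`. Splitting along `S = V(G^{AB})` expands the four
factors of `Δ(G, A, B)`, and what is left besides the claimed product is a multiple of
`Δ(G*, A, B)`. That term vanishes: splitting `G*` once more, along the components that meet `A`,
puts `A` on one side and `B` on the other. -/

open Finset

namespace SimpleGraph

variable {V : Type*} (G : SimpleGraph V)

def IsAdjClosed (S : Set V) : Prop := ∀ ⦃u v⦄, G.Adj u v → (u ∈ S ↔ v ∈ S)

variable {G}

theorem isAdjClosed_setOf_reachable (A : Set V) :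
    G.IsAdjClosed {v | ∃ a ∈ A, G.Reachable v a} := fun _ _ huv =>
  ⟨fun ⟨a, ha, hr⟩ => ⟨a, ha, huv.symm.reachable.trans hr⟩,
    fun ⟨a, ha, hr⟩ => ⟨a, ha, huv.reachable.trans hr⟩⟩

theorem IsAdjClosed.inter {S T : Set V} (hS : G.IsAdjClosed S) (hT : G.IsAdjClosed T) :
    G.IsAdjClosed (S ∩ T) := fun _ _ huv => and_congr (hS huv) (hT huv)

end SimpleGraph

open SimpleGraph

section

variable {V : Type*} [Fintype V] {G : SimpleGraph V}

theorem sigmaDel_eq_mul_of_isAdjClosed {S : Set V} (hS : G.IsAdjClosed S) (W : Set V) :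
    sigmaDel G W = sigmaDel G (Sᶜ ∪ W) * sigmaDel G (S ∪ W) := by
  unfold sigmaDel
  rw [← card_product]
  refine card_nbij' (fun s => (s.filter (· ∈ S), s.filter (· ∉ S))) (fun p => p.1 ∪ p.2)
    ?_ ?_ (fun s _ => filter_union_filter_not_eq _ s) ?_
  · intro s hs
    simp only [coe_filter, coe_product, Set.mem_prod, Set.mem_ofPred_eq, mem_univ, true_and,
      mem_filter, Set.mem_union, Set.mem_compl_iff] at hs ⊢
    grind
  · rintro ⟨a, b⟩ hab
    simp only [coe_filter, coe_product, Set.mem_prod, Set.mem_ofPred_eq, mem_univ, true_and,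
      mem_union, Set.mem_union, Set.mem_compl_iff] at hab ⊢
    refine ⟨fun v hv => ?_, fun u hu v hv huv => ?_⟩
    · grind
    · have := hS huv
      grind
  · rintro ⟨a, b⟩ hab
    simp only [coe_filter, coe_product, Set.mem_prod, Set.mem_ofPred_eq, mem_univ, true_and,
      Set.mem_union, Set.mem_compl_iff] at hab
    simp only [filter_union, Prod.mk.injEq]
    constructor
    · rw [filter_true_of_mem fun v hv => ?_, filter_false_of_mem fun v hv => ?_, union_empty] <;>
        grind
    · rw [filter_false_of_mem fun v hv => ?_, filter_true_of_mem fun v hv => ?_, empty_union] <;>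
        grind

theorem sigmaDel_induce (S W : Set V) [Fintype S] :
    sigmaDel (G.induce S) {x | (x : V) ∈ W} = sigmaDel G (Sᶜ ∪ W) := by
  unfold sigmaDel
  refine card_nbij' (fun s => s.map (Function.Embedding.subtype _)) (fun t => t.subtype (· ∈ S))
    ?_ ?_ ?_ ?_
  · intro s hs
    simp only [coe_filter, mem_univ, true_and, Set.mem_ofPred_eq, mem_map,
      Function.Embedding.coe_subtype, Set.mem_union, Set.mem_compl_iff, comap_adj] at hs ⊢
    grind
  · intro t ht
    simp only [coe_filter, mem_univ, true_and, Set.mem_ofPred_eq, mem_subtype,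
      Set.mem_union, Set.mem_compl_iff, comap_adj, Function.Embedding.coe_subtype] at ht ⊢
    grind
  · intro s _
    ext
    simp
  · intro t ht
    simp only [coe_filter, mem_univ, true_and, Set.mem_ofPred_eq,
      Set.mem_union, Set.mem_compl_iff] at ht
    simp only [subtype_map]
    exact filter_true_of_mem fun v hv => by grind

theorem sigmaG_induce (S : Set V) [Fintype S] : sigmaG (G.induce S) = sigmaDel G Sᶜ := by
  simpa [sigmaG] using sigmaDel_induce (G := G) S ∅

theorem sigmaG_induce_compl_diff (S A : Set V) [Fintype ↥(Sᶜ \ A)] :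
    sigmaG (G.induce (Sᶜ \ A)) = sigmaDel G (S ∪ A) := by
  rw [sigmaG_induce, Set.compl_sdiff, compl_compl, Set.union_comm]

theorem deltaG_induce (S A B : Set V) [Fintype S] :
    deltaG (G.induce S) {x | (x : V) ∈ A} {x | (x : V) ∈ B} =
      (sigmaDel G (Sᶜ ∪ A) : ℤ) * sigmaDel G (Sᶜ ∪ B) -
        (sigmaDel G Sᶜ : ℤ) * sigmaDel G (Sᶜ ∪ (A ∪ B)) := by
  rw [deltaG, sigmaG_induce, sigmaDel_induce, sigmaDel_induce, ← sigmaDel_induce S (A ∪ B)]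
  rfl

theorem sigmaDel_union_mul_sigmaDel_union_of_isAdjClosed {P W A B : Set V}
    (hP : G.IsAdjClosed P) (hA : A ⊆ P ∪ W) (hB : B ⊆ Pᶜ ∪ W) :
    sigmaDel G (W ∪ A) * sigmaDel G (W ∪ B) = sigmaDel G W * sigmaDel G (W ∪ (A ∪ B)) := by
  have hPA : P ∪ (W ∪ A) = P ∪ W := by grind
  have hPB : Pᶜ ∪ (W ∪ B) = Pᶜ ∪ W := by grind
  have hPAB : P ∪ (W ∪ (A ∪ B)) = P ∪ (W ∪ B) := by grind
  have hPAB' : Pᶜ ∪ (W ∪ (A ∪ B)) = Pᶜ ∪ (W ∪ A) := by grind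
  rw [sigmaDel_eq_mul_of_isAdjClosed hP (W ∪ A), sigmaDel_eq_mul_of_isAdjClosed hP (W ∪ B),
    sigmaDel_eq_mul_of_isAdjClosed hP W, sigmaDel_eq_mul_of_isAdjClosed hP (W ∪ (A ∪ B)),
    hPA, hPB, hPAB, hPAB']
  ring

end

theorem sigmaG_disjUnion {V₁ V₂ : Type*} [Fintype V₁] [Fintype V₂]
    (G₁ : SimpleGraph V₁) (G₂ : SimpleGraph V₂) :
    sigmaG (disjUnion G₁ G₂) = sigmaG G₁ * sigmaG G₂ := by
  unfold sigmaG sigmaDel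
  rw [← card_product]
  refine card_nbij' (fun s => (s.toLeft, s.toRight)) (fun p => p.1.disjSum p.2) ?_ ?_
    (fun s _ => toLeft_disjSum_toRight) (fun p _ => by simp)
  · intro s hs
    simp only [coe_filter, coe_product, Set.mem_prod, Set.mem_ofPred_eq, mem_univ, true_and,
      Set.mem_empty_iff_false, not_false_eq_true, implies_true, mem_toLeft, mem_toRight] at hs ⊢
    exact ⟨fun u hu v hv => hs _ hu _ hv, fun u hu v hv => hs _ hu _ hv⟩
  · rintro ⟨a, b⟩ hab
    simp only [coe_filter, coe_product, Set.mem_prod, Set.mem_ofPred_eq, mem_univ, true_and,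
      Set.mem_empty_iff_false, not_false_eq_true, implies_true] at hab ⊢
    rintro (u | u) hu (v | v) hv
    · exact hab.1 u (inl_mem_disjSum.mp hu) v (inl_mem_disjSum.mp hv)
    · exact id
    · exact id
    · exact hab.2 u (inr_mem_disjSum.mp hu) v (inr_mem_disjSum.mp hv)

theorem delta_component_decomposition {V : Type*} [Fintype V] (G : SimpleGraph V)
    (A B : Set V) :
    -- `VAB` : vertices whose connected component meets both `A` and `B`
    ∀ VAB : Set V, VAB = {v | (∃ a ∈ A, G.Reachable v a) ∧ (∃ b ∈ B, G.Reachable v b)} →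
    deltaG G A B =
      (sigmaG (disjUnion (G.induce (VABᶜ \ A)) (G.induce (VABᶜ \ B))) : ℤ) *
        deltaG (G.induce VAB) {x | (x : V) ∈ A} {x | (x : V) ∈ B} := by
  intro T hT
  have hTclosed : G.IsAdjClosed T := by
    rw [hT]
    exact (isAdjClosed_setOf_reachable A).inter (isAdjClosed_setOf_reachable B)
  have hsep : (sigmaDel G (T ∪ A) : ℤ) * sigmaDel G (T ∪ B) =
      (sigmaDel G T : ℤ) * sigmaDel G (T ∪ (A ∪ B)) :=
    mod_cast sigmaDel_union_mul_sigmaDel_union_of_isAdjClosed (isAdjClosed_setOf_reachable A)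
      (fun a ha => Or.inl ⟨a, ha, .refl a⟩)
      (fun b hb => or_iff_not_imp_left.mpr fun hbA => hT ▸ ⟨not_not.mp hbA, b, hb, .refl b⟩)
  have hsplit := sigmaDel_eq_mul_of_isAdjClosed hTclosed
  rw [deltaG_induce, sigmaG_disjUnion, sigmaG_induce_compl_diff, sigmaG_induce_compl_diff,
    deltaG, sigmaG, hsplit A, hsplit B, hsplit ∅, hsplit (A ∪ B), Set.union_empty,
    Set.union_empty]
  push_cast
  linear_combination ((sigmaDel G Tᶜ : ℤ) * sigmaDel G (Tᶜ ∪ (A ∪ B))) * hsep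
end

section
/- Let G = (V,E) be a finite simple graph, A, B ⊆ V disjoint, and W ⊆ A. An A-B-path is a path P = (v₁,…,v_k) with V(P) ∩ A = {v₁} and V(P) ∩ B = {v_k}. If every A-B-path in G has even length, then every N_G(W)-B-path in G₋A has odd length; if every A-B-path in G has odd length, then every N_G(W)-B-path in G₋A has even length. -/
/-- `p` is an `A`-`B`-path: a path meeting `A` exactly in its first vertex
and `B` exactly in its last vertex. -/
def IsABPath {V : Type*} (G : SimpleGraph V) (A B : Set V) {a b : V} (p : G.Walk a b) : Prop :=
  p.IsPath ∧ a ∈ A ∧ b ∈ B ∧ (∀ x ∈ p.support, x ∈ A → x = a) ∧ (∀ x ∈ p.support, x ∈ B → x = b)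

theorem parity_flip_of_ABpaths {V : Type*} (G : SimpleGraph V) (A B : Set V)
    (hAB : Disjoint A B) (W : Set V) (hW : W ⊆ A) :
    -- if every `A`-`B`-path in `G` is even, then every `N_G(W)`-`B`-path in `G₋A` is odd
    ((∀ a b, ∀ p : G.Walk a b, IsABPath G A B p → Even p.length) →
      ∀ x y, ∀ q : G.Walk x y, (∀ z ∈ q.support, z ∉ A) →
        IsABPath G {x' | x' ∉ A ∧ ∃ w ∈ W, G.Adj w x'} B q → Odd q.length) ∧
    -- if every `A`-`B`-path in `G` is odd, then every `N_G(W)`-`B`-path in `G₋A` is even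
    ((∀ a b, ∀ p : G.Walk a b, IsABPath G A B p → Odd p.length) →
      ∀ x y, ∀ q : G.Walk x y, (∀ z ∈ q.support, z ∉ A) →
        IsABPath G {x' | x' ∉ A ∧ ∃ w ∈ W, G.Adj w x'} B q → Even q.length) := by
  constructor <;>
  · intro h x y q hq hq'
    obtain ⟨hpath, ⟨hxA, w, hwW, hadj⟩, hyB, hA', hB'⟩ := hq'
    have hw : w ∈ A := hW hwW
    have hwq : w ∉ q.support := fun hc => hq w hc hw
    have habp : IsABPath G A B (SimpleGraph.Walk.cons hadj q) := by
      refine ⟨hpath.cons hwq, hw, hyB, ?_, ?_⟩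
      · intro z hz hzA
        rcases (SimpleGraph.Walk.mem_support_iff _).mp hz with h1 | h2
        · exact h1
        · exact absurd hzA (hq z (by simpa using h2))
      · intro z hz hzB
        rcases (SimpleGraph.Walk.mem_support_iff _).mp hz with h1 | h2
        · exact (hAB.ne_of_mem hw (h1 ▸ hzB) rfl).elim
        · exact hB' z (by simpa using h2) hzB
    have key := h w y (SimpleGraph.Walk.cons hadj q) habp
    simp only [SimpleGraph.Walk.length_cons, Nat.even_add_one, Nat.odd_add_one, not_not] at key
    simpa using key
end

section
/- Let G = (V,E) be a finite simple graph and A, B ⊆ V. If there exists at least one A-B-path in G and every A-B-path in G has even length, then σ(G₋A)·σ(G₋B) < σ(G)·σ(G₋A₋B). -/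
open scoped Classical

/-!
For `S` independent avoiding `A` and `T` independent avoiding `B`, let `D` be the set of vertices
joined to `A` inside `S ∆ T`. Inside `S ∆ T` every edge runs between `S \ T` and `T \ S`, and an
`A`-`B`-path there would run from `T \ S` to `S \ T`, so it would have odd length; hence `D` misses
`B`. Switching along these Kempe chains, `(S, T) ↦ (S ∆ D, T ∆ D)`, gives a pair of independent
sets whose second member avoids `A ∪ B`. The switch preserves `S ∆ T`, hence `D`, so it is an
involution, and its image consists of pairs `(X, Y)` with no `A`-`B`-walk inside `X ∆ Y`. The
even and odd vertices of a shortest `A`-`B`-path form a pair outside the image.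
-/

open Finset
open scoped symmDiff

theorem IsABPath.getVert_notMem_union {V : Type*} {G : SimpleGraph V} {A B : Set V} {a b : V}
    {p : G.Walk a b} (hp : IsABPath G A B p) {j : ℕ} (hj0 : 0 < j) (hj : j < p.length) :
    p.getVert j ∉ A ∪ B := by
  rintro (hA | hB)
  · have := (hp.1.getVert_eq_start_iff hj.le).1 (hp.2.2.2.1 _ (p.getVert_mem_support j) hA)
    omega
  · have := (hp.1.getVert_eq_end_iff hj.le).1 (hp.2.2.2.2 _ (p.getVert_mem_support j) hB)
    omega

namespace SimpleGraph

variable {V : Type*} {G : SimpleGraph V}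

namespace Walk

variable {A B W : Set V} {u v a b : V}

theorem support_drop_subset (p : G.Walk u v) (n : ℕ) : (p.drop n).support ⊆ p.support := by
  intro x hx
  obtain ⟨m, rfl, -⟩ := mem_support_iff_exists_getVert.1 hx
  rw [drop_getVert]
  exact p.getVert_mem_support _

theorem even_length_iff_of_support_subset_symmDiff {S T : Set V} (hS : G.IsIndepSet S)
    (hT : G.IsIndepSet T) (p : G.Walk u v) (hp : ∀ x ∈ p.support, x ∈ S ∆ T) :
    Even p.length ↔ (u ∈ S ↔ v ∈ S) := by
  induction p with
  | nil => simp
  | @cons x y z h q ih =>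
    have hx : x ∈ S ∆ T := hp x (by simp)
    have hy : y ∈ S ∆ T := hp y (by simp)
    have hSS : ¬ (x ∈ S ∧ y ∈ S) := fun hxy => hS hxy.1 hxy.2 h.ne h
    have hTT : ¬ (x ∈ T ∧ y ∈ T) := fun hxy => hT hxy.1 hxy.2 h.ne h
    rw [Set.mem_symmDiff] at hx hy
    rw [length_cons, Nat.even_add_one, ih fun w hw => hp w (List.mem_cons_of_mem _ hw)]
    tauto

structure IsShortestABWalkWithin (A B W : Set V) (p : G.Walk a b) : Prop where
  start_mem : a ∈ A
  end_mem : b ∈ B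
  support_subset : ∀ x ∈ p.support, x ∈ W
  length_le : ∀ a' ∈ A, ∀ b' ∈ B, ∀ q : G.Walk a' b', (∀ x ∈ q.support, x ∈ W) →
    p.length ≤ q.length

theorem exists_isShortestABWalkWithin (w : G.Walk a b) (ha : a ∈ A) (hb : b ∈ B)
    (hw : ∀ x ∈ w.support, x ∈ W) :
    ∃ (a' b' : V) (p : G.Walk a' b'), p.IsShortestABWalkWithin A B W := by
  have h : ∃ n, ∃ a' ∈ A, ∃ b' ∈ B, ∃ q : G.Walk a' b', (∀ x ∈ q.support, x ∈ W) ∧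
      q.length = n := ⟨_, a, ha, b, hb, w, hw, rfl⟩
  obtain ⟨a', ha', b', hb', p, hp, hlen⟩ := Nat.find_spec h
  exact ⟨a', b', p, ⟨ha', hb', hp, fun a'' ha'' b'' hb'' q hq =>
    hlen ▸ Nat.find_min' h ⟨a'', ha'', b'', hb'', q, hq, rfl⟩⟩⟩

namespace IsShortestABWalkWithin

variable {p : G.Walk a b} (hp : p.IsShortestABWalkWithin A B W)
include hp

theorem isABPath : IsABPath G A B p := by
  have hbypass : p.bypass = p :=
    p.bypass_eq_self_of_length_le_length_bypass <| hp.length_le a hp.start_mem b hp.end_mem _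
      fun x hx => hp.support_subset x (p.support_bypass_subset_support hx)
  refine ⟨hbypass ▸ p.bypass_isPath, hp.start_mem, hp.end_mem, fun x hx hxA => ?_,
    fun x hx hxB => ?_⟩
  · by_contra hne
    have := hp.length_le x hxA b hp.end_mem (p.dropUntil x hx)
      fun y hy => hp.support_subset y (p.support_dropUntil_subset_support hx hy)
    exact (length_dropUntil_lt_length hx hne).not_ge this
  · by_contra hne
    have := hp.length_le a hp.start_mem x hxB (p.takeUntil x hx)
      fun y hy => hp.support_subset y (p.support_takeUntil_subset_support hx hy)
    exact (length_takeUntil_lt_length hx hne).not_ge this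

theorem le_succ_of_adj_getVert {i j : ℕ} (hj : j ≤ p.length)
    (h : G.Adj (p.getVert i) (p.getVert j)) : j ≤ i + 1 := by
  have hlen := hp.length_le a hp.start_mem b hp.end_mem ((p.take i).append (cons h (p.drop j)))
    fun x hx => by
      rw [mem_support_append_iff, support_cons, List.mem_cons, support_take] at hx
      refine hp.support_subset x ?_
      rcases hx with hx | rfl | hx
      · exact List.mem_of_mem_take hx
      · exact p.getVert_mem_support i
      · exact p.support_drop_subset j hx
  simp only [length_append, take_length, length_cons, drop_length] at hlen
  omega

theorem isIndepSet_image_getVert {P : ℕ → Prop} [DecidablePred P] (hP : ∀ i, P i → ¬ P (i + 1)) :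
    G.IsIndepSet ↑(((range (p.length + 1)).filter P).image p.getVert) := by
  intro _ hu _ hv hne hadj
  simp only [coe_image, coe_filter, mem_range, Set.mem_image, Set.mem_ofPred_eq] at hu hv
  obtain ⟨i, ⟨hi, hPi⟩, rfl⟩ := hu
  obtain ⟨j, ⟨hj, hPj⟩, rfl⟩ := hv
  have hji := hp.le_succ_of_adj_getVert (Nat.lt_succ_iff.1 hj) hadj
  have hij := hp.le_succ_of_adj_getVert (Nat.lt_succ_iff.1 hi) hadj.symm
  obtain rfl | rfl | rfl : j = i + 1 ∨ j = i ∨ i = j + 1 := by omega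
  · exact hP i hPi hPj
  · exact hne rfl
  · exact hP j hPj hPi

end IsShortestABWalkWithin

end Walk

theorem IsIndepSet.symmDiff_of_closed {S T D : Set V} (hS : G.IsIndepSet S) (hT : G.IsIndepSet T)
    (hDU : D ⊆ S ∆ T) (hD : ∀ ⦃v u⦄, v ∈ D → u ∈ S ∆ T → G.Adj v u → u ∈ D) :
    G.IsIndepSet (S ∆ D) := by
  have hDT : ∀ ⦃v⦄, v ∈ D → v ∉ S → v ∈ T := fun v hv hvS =>
    ((Set.mem_symmDiff.1 (hDU hv)).resolve_left fun h => hvS h.1).1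
  have hcross : ∀ ⦃u v⦄, u ∈ S → u ∉ D → v ∈ D → v ∉ S → ¬ G.Adj u v := by
    intro u v hu huD hv hvS hadj
    by_cases huT : u ∈ T
    · exact hT huT (hDT hv hvS) hadj.ne hadj
    · exact huD (hD hv (Set.mem_symmDiff.2 (Or.inl ⟨hu, huT⟩)) hadj.symm)
  intro u hu v hv hne hadj
  rcases Set.mem_symmDiff.1 hu with ⟨huS, huD⟩ | ⟨huD, huS⟩ <;>
    rcases Set.mem_symmDiff.1 hv with ⟨hvS, hvD⟩ | ⟨hvD, hvS⟩
  · exact hS huS hvS hne hadj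
  · exact hcross huS huD hvD hvS hadj
  · exact hcross hvS hvD huD huS hadj.symm
  · exact hT (hDT huD huS) (hDT hvD hvS) hne hadj

noncomputable def reachableWithin (G : SimpleGraph V) (A : Set V) (U : Finset V) : Finset V :=
  U.filter fun v => ∃ a ∈ A, ∃ w : G.Walk a v, ∀ x ∈ w.support, x ∈ U

section reachableWithin

variable {A : Set V} {U : Finset V} {u v : V}

theorem mem_reachableWithin :
    v ∈ G.reachableWithin A U ↔ v ∈ U ∧ ∃ a ∈ A, ∃ w : G.Walk a v, ∀ x ∈ w.support, x ∈ U :=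
  mem_filter

theorem reachableWithin_subset : G.reachableWithin A U ⊆ U :=
  filter_subset _ _

theorem mem_reachableWithin_of_mem (hv : v ∈ U) (hvA : v ∈ A) : v ∈ G.reachableWithin A U :=
  mem_reachableWithin.2 ⟨hv, v, hvA, .nil, by simpa using hv⟩

theorem mem_reachableWithin_of_adj (hv : v ∈ G.reachableWithin A U) (hu : u ∈ U)
    (h : G.Adj v u) : u ∈ G.reachableWithin A U := by
  obtain ⟨-, a, ha, w, hw⟩ := mem_reachableWithin.1 hv
  refine mem_reachableWithin.2 ⟨hu, a, ha, w.concat h, fun x hx => ?_⟩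
  rw [Walk.support_concat, List.mem_append, List.mem_singleton] at hx
  exact hx.elim (hw x) (· ▸ hu)

end reachableWithin

noncomputable def kempeSwitch (G : SimpleGraph V) (A : Set V) (st : Finset V × Finset V) :
    Finset V × Finset V :=
  (st.1 ∆ G.reachableWithin A (st.1 ∆ st.2), st.2 ∆ G.reachableWithin A (st.1 ∆ st.2))

section kempeSwitch

variable {A : Set V}

theorem kempeSwitch_symmDiff (st : Finset V × Finset V) :
    (G.kempeSwitch A st).1 ∆ (G.kempeSwitch A st).2 = st.1 ∆ st.2 := by
  rw [kempeSwitch, symmDiff_symmDiff_symmDiff_comm, symmDiff_self, symmDiff_bot]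

theorem kempeSwitch_involutive : Function.Involutive (G.kempeSwitch A) := by
  intro st
  conv_lhs => rw [kempeSwitch, kempeSwitch_symmDiff]
  simp only [kempeSwitch, symmDiff_symmDiff_cancel_right]

theorem isIndepSet_kempeSwitch_fst {S T : Finset V} (hS : G.IsIndepSet ↑S)
    (hT : G.IsIndepSet ↑T) : G.IsIndepSet ↑(G.kempeSwitch A (S, T)).1 := by
  rw [kempeSwitch, coe_symmDiff]
  refine hS.symmDiff_of_closed hT ?_ fun v u hv hu h => ?_
  · rw [← coe_symmDiff]
    exact coe_subset.2 reachableWithin_subset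
  · rw [← coe_symmDiff] at hu
    exact mem_reachableWithin_of_adj hv hu h

theorem isIndepSet_kempeSwitch_snd {S T : Finset V} (hS : G.IsIndepSet ↑S)
    (hT : G.IsIndepSet ↑T) : G.IsIndepSet ↑(G.kempeSwitch A (S, T)).2 := by
  have := isIndepSet_kempeSwitch_fst (A := A) hT hS
  rwa [kempeSwitch, symmDiff_comm T S] at this

end kempeSwitch

theorem notMem_of_mem_reachableWithin_symmDiff {A B : Set V}
    (heven : ∀ a b, ∀ p : G.Walk a b, IsABPath G A B p → Even p.length) {S T : Finset V}
    (hS : G.IsIndepSet ↑S) (hT : G.IsIndepSet ↑T) (hSA : ∀ v ∈ S, v ∉ A)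
    (hTB : ∀ v ∈ T, v ∉ B) : ∀ v ∈ G.reachableWithin A (S ∆ T), v ∉ B := by
  intro v hv hvB
  obtain ⟨-, a, ha, w, hw⟩ := mem_reachableWithin.1 hv
  obtain ⟨a', b', p, hp⟩ := w.exists_isShortestABWalkWithin (W := ↑(S ∆ T)) ha hvB hw
  have hsupp : ∀ x ∈ p.support, x ∈ (↑S : Set V) ∆ ↑T := by
    simpa only [coe_symmDiff] using hp.support_subset
  have ha'S : a' ∉ S := fun h => hSA a' h hp.start_mem
  have hb'S : b' ∈ S := ((mem_symmDiff.1 (hp.support_subset b' p.end_mem_support)).resolve_right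
    fun h => hTB b' h.1 hp.end_mem).1
  exact ha'S <|
    ((p.even_length_iff_of_support_subset_symmDiff hS hT hsupp).1 (heven _ _ p hp.isABPath)).2 hb'S

noncomputable def indepAvoiding [Fintype V] (G : SimpleGraph V) (W : Set V) : Finset (Finset V) :=
  univ.filter fun s : Finset V => (∀ v ∈ s, v ∉ W) ∧ ∀ u ∈ s, ∀ v ∈ s, ¬ G.Adj u v

section indepAvoiding

variable [Fintype V] {A B W : Set V}

theorem card_indepAvoiding : #(G.indepAvoiding W) = sigmaDel G W := rfl

theorem mem_indepAvoiding {s : Finset V} :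
    s ∈ G.indepAvoiding W ↔ (∀ v ∈ s, v ∉ W) ∧ G.IsIndepSet ↑s := by
  simp only [indepAvoiding, mem_filter, mem_univ, true_and]
  refine and_congr_right fun _ => ⟨fun h u hu v hv _ => h u hu v hv, fun h u hu v hv huv => ?_⟩
  obtain rfl | hne := eq_or_ne u v
  · exact G.irrefl huv
  · exact h hu hv hne huv

theorem mapsTo_kempeSwitch
    (heven : ∀ a b, ∀ p : G.Walk a b, IsABPath G A B p → Even p.length) :
    Set.MapsTo (G.kempeSwitch A) ↑(G.indepAvoiding A ×ˢ G.indepAvoiding B)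
      ↑((G.indepAvoiding ∅ ×ˢ G.indepAvoiding (A ∪ B)).filter
        fun xy => ∀ v ∈ G.reachableWithin A (xy.1 ∆ xy.2), v ∉ B) := by
  rintro ⟨S, T⟩ hst
  rw [mem_coe, mem_product, mem_indepAvoiding, mem_indepAvoiding] at hst
  obtain ⟨⟨hSA, hS⟩, ⟨hTB, hT⟩⟩ := hst
  have hDB := notMem_of_mem_reachableWithin_symmDiff heven hS hT hSA hTB
  rw [mem_coe, mem_filter, mem_product, mem_indepAvoiding, mem_indepAvoiding,
    kempeSwitch_symmDiff]
  refine ⟨⟨⟨fun _ _ => id, isIndepSet_kempeSwitch_fst hS hT⟩, ?_, isIndepSet_kempeSwitch_snd hS hT⟩,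
    hDB⟩
  intro v hv hvAB
  rw [kempeSwitch, mem_symmDiff] at hv
  rcases hv with ⟨hvT, hvD⟩ | ⟨hvD, hvT⟩
  · rcases hvAB with hvA | hvB
    · have hvU : v ∈ S ∆ T := mem_symmDiff.2 (Or.inr ⟨hvT, fun h => hSA v h hvA⟩)
      exact hvD (mem_reachableWithin_of_mem hvU hvA)
    · exact hTB v hvT hvB
  · rcases hvAB with hvA | hvB
    · have hvS := ((mem_symmDiff.1 (reachableWithin_subset hvD)).resolve_right (hvT ·.1)).1
      exact hSA v hvS hvA
    · exact hDB v hvD hvB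

theorem exists_mem_indepAvoiding_of_isShortestABWalkWithin
    (heven : ∀ a b, ∀ p : G.Walk a b, IsABPath G A B p → Even p.length) {a b : V}
    {p : G.Walk a b} (hp : p.IsShortestABWalkWithin A B W) :
    ∃ X ∈ G.indepAvoiding ∅, ∃ Y ∈ G.indepAvoiding (A ∪ B), b ∈ G.reachableWithin A (X ∆ Y) := by
  have hpath := hp.isABPath
  obtain ⟨k, hk⟩ := heven a b p hpath
  set X := ((range (p.length + 1)).filter Even).image p.getVert with hX
  set Y := ((range (p.length + 1)).filter Odd).image p.getVert with hY
  have hdisj : Disjoint X Y := by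
    refine Finset.disjoint_left.2 fun x hxX hxY => ?_
    simp only [hX, hY, mem_image, mem_filter, mem_range] at hxX hxY
    obtain ⟨i, ⟨hi, hieven⟩, rfl⟩ := hxX
    obtain ⟨j, ⟨hj, hjodd⟩, hij⟩ := hxY
    have := hpath.1.getVert_injOn (by simp; omega) (by simp; omega) hij
    exact Nat.not_even_iff_odd.2 hjodd (this ▸ hieven)
  have hsupp : ∀ x ∈ p.support, x ∈ X ∆ Y := by
    intro x hx
    obtain ⟨i, rfl, hi⟩ := Walk.mem_support_iff_exists_getVert.1 hx
    rw [hdisj.symmDiff_eq_sup, sup_eq_union, mem_union]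
    rcases Nat.even_or_odd i with h | h
    · exact Or.inl (mem_image_of_mem _ (mem_filter.2 ⟨mem_range.2 (by omega), h⟩))
    · exact Or.inr (mem_image_of_mem _ (mem_filter.2 ⟨mem_range.2 (by omega), h⟩))
  refine ⟨X, mem_indepAvoiding.2 ⟨fun _ _ => id, hp.isIndepSet_image_getVert
      fun _ h h' => Nat.even_add_one.1 h' h⟩,
    Y, mem_indepAvoiding.2 ⟨?_, hp.isIndepSet_image_getVert fun _ h h' => Nat.odd_add_one.1 h' h⟩,
    mem_reachableWithin.2 ⟨hsupp b p.end_mem_support, a, hp.start_mem, p, hsupp⟩⟩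
  intro v hv
  simp only [hY, mem_image, mem_filter, mem_range] at hv
  obtain ⟨j, ⟨hj, hjodd⟩, rfl⟩ := hv
  rw [Nat.odd_iff] at hjodd
  exact hpath.getVert_notMem_union (by omega) (by omega)

end indepAvoiding

end SimpleGraph

theorem sigma_ineq_of_even_ABpaths {V : Type*} [Fintype V] (G : SimpleGraph V) (A B : Set V)
    (hex : ∃ a b, ∃ p : G.Walk a b, IsABPath G A B p)
    (heven : ∀ a b, ∀ p : G.Walk a b, IsABPath G A B p → Even p.length) :
    sigmaDel G A * sigmaDel G B < sigmaG G * sigmaDel G (A ∪ B) := by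
  open SimpleGraph in
  obtain ⟨a, b, w, -, ha, hb, -⟩ := hex
  obtain ⟨a', b', p, hp⟩ := w.exists_isShortestABWalkWithin (W := Set.univ) ha hb fun _ _ => trivial
  obtain ⟨X, hX, Y, hY, hbXY⟩ := exists_mem_indepAvoiding_of_isShortestABWalkWithin heven hp
  set Z := (G.indepAvoiding ∅ ×ˢ G.indepAvoiding (A ∪ B)).filter
    fun xy => ∀ v ∈ G.reachableWithin A (xy.1 ∆ xy.2), v ∉ B
  calc sigmaDel G A * sigmaDel G B = #(G.indepAvoiding A ×ˢ G.indepAvoiding B) := by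
        rw [card_product, card_indepAvoiding, card_indepAvoiding]
    _ ≤ #Z := card_le_card_of_injOn _ (mapsTo_kempeSwitch heven)
        kempeSwitch_involutive.injective.injOn
    _ < #(G.indepAvoiding ∅ ×ˢ G.indepAvoiding (A ∪ B)) :=
        card_lt_card (filter_ssubset.2 ⟨(X, Y), mem_product.2 ⟨hX, hY⟩,
          fun h => h b' hbXY hp.end_mem⟩)
    _ = sigmaG G * sigmaDel G (A ∪ B) := by
        rw [card_product, card_indepAvoiding, card_indepAvoiding]; rfl
end

section
/- Let G = (V,E) be a finite simple bipartite graph and u, v ∈ V two vertices in the same connected component. If the distance d_G(u,v) is even then σ(G₋ᵤ)·σ(G₋ᵥ) < σ(G)·σ(G₋ᵤ₋ᵥ), and if d_G(u,v) is odd then σ(G₋ᵤ)·σ(G₋ᵥ) > σ(G)·σ(G₋ᵤ₋ᵥ). -/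
open scoped Classical

/-!
`σ(G)·σ(G₋ᵤ₋ᵥ)` counts pairs `(S, T)` of independent sets with `u, v ∉ T`, and `σ(G₋ᵤ)·σ(G₋ᵥ)`
those with `u ∉ S`, `v ∉ T`. Pairs with `u` in neither set occur in both counts; it remains to
compare the pairs with `u ∈ S \ T` against those with `u ∈ T \ S`. Exchanging `S` and `T` along
the component `K` of `u` in `G[S ∆ T]` (a Kempe swap) matches them bijectively as long as `v ∉ K`.
If `v ∈ K`, then `v ∈ S` (as `v ∉ T`), and since `K` is connected and its edges alternate
between `S` and `T`, `v` is on the same side as `u` iff `d(u, v)` is even. So only one of the two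
remaining classes can be nonempty, and splitting a `u`-`v` path by colour shows that it is.
-/

namespace Finset

theorem card_filter_eq_add_add {α : Type*} {s : Finset α} {p q r t : α → Prop}
    [DecidablePred p] [DecidablePred q] [DecidablePred r] [DecidablePred t]
    (h : ∀ x ∈ s, p x ↔ q x ∨ r x ∨ t x) (hq : ∀ x ∈ s, q x → ¬ r x ∧ ¬ t x)
    (hr : ∀ x ∈ s, r x → ¬ t x) :
    #{x ∈ s | p x} = #{x ∈ s | q x} + #{x ∈ s | r x} + #{x ∈ s | t x} := by
  rw [← card_union_of_disjoint (disjoint_filter.2 fun x hx hqx => (hq x hx hqx).1), ← filter_or,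
    ← card_union_of_disjoint (disjoint_filter.2 fun x hx hqr =>
      hqr.elim (fun hqx => (hq x hx hqx).2) (hr x hx)), ← filter_or]
  exact congrArg card (filter_congr fun x hx => by rw [h x hx, or_assoc])

end Finset

namespace SimpleGraph

open Finset
open scoped symmDiff

variable {V : Type*} {G : SimpleGraph V}

theorem Coloring.iff_congr_of_reachable {W : Type*} {H : SimpleGraph W}
    (c₁ c₂ : H.Coloring Bool) {a b : W} (h : H.Reachable a b) :
    (c₁ a ↔ c₁ b) ↔ (c₂ a ↔ c₂ b) := by
  obtain ⟨p⟩ := h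
  rw [← c₁.even_length_iff_congr p, c₂.even_length_iff_congr p]

theorem IsIndepSet.mem_iff_notMem_of_adj {S T : Finset V} (hS : G.IsIndepSet S)
    (hT : G.IsIndepSet T) {a b : V} (ha : a ∈ S ∆ T) (hb : b ∈ S ∆ T) (hab : G.Adj a b) :
    a ∈ S ↔ b ∉ S := by
  have hS' := fun ha hb => hS (mem_coe.2 ha) (mem_coe.2 hb) hab.ne
  have hT' := fun ha hb => hT (mem_coe.2 ha) (mem_coe.2 hb) hab.ne
  rw [mem_symmDiff] at ha hb
  tauto

variable (G) in
noncomputable def componentIn (D : Finset V) (u : V) : Finset V :=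
  D.filter fun y => ∃ (hu : u ∈ D) (hy : y ∈ D),
    (G.induce (D : Set V)).Reachable ⟨u, hu⟩ ⟨y, hy⟩

section componentIn

variable {D : Finset V} {u a b : V}

theorem componentIn_subset : G.componentIn D u ⊆ D := filter_subset _ _

theorem self_mem_componentIn (hu : u ∈ D) : u ∈ G.componentIn D u :=
  mem_filter.2 ⟨hu, hu, hu, .rfl⟩

theorem mem_componentIn_of_adj (ha : a ∈ G.componentIn D u) (hb : b ∈ D) (hab : G.Adj a b) :
    b ∈ G.componentIn D u := by
  obtain ⟨-, hu, ha, hua⟩ := mem_filter.1 ha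
  exact mem_filter.2 ⟨hb, hu, hb, hua.trans (Adj.reachable (induce_adj.2 hab))⟩

theorem Walk.mem_componentIn {v : V} (p : G.Walk u v) (hp : ∀ x ∈ p.support, x ∈ D) :
    v ∈ G.componentIn D u :=
  mem_filter.2 ⟨hp v p.end_mem_support, _, _, ⟨p.induce (D : Set V) hp⟩⟩

theorem mem_iff_mem_iff_of_mem_componentIn (c : G.Coloring Bool) {S T : Finset V}
    (hS : G.IsIndepSet S) (hT : G.IsIndepSet T) (ha : a ∈ G.componentIn (S ∆ T) u) :
    (u ∈ S ↔ a ∈ S) ↔ (c u ↔ c a) := by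
  obtain ⟨-, hu, ha, hua⟩ := mem_filter.1 ha
  let side : (G.induce (S ∆ T : Finset V)).Coloring Bool :=
    Coloring.mk (fun x => decide (x.1 ∈ S)) fun {x y} hxy => by
      simp [hS.mem_iff_notMem_of_adj hT x.2 y.2 hxy]
  have key : (decide (u ∈ S) ↔ decide (a ∈ S)) ↔ (c u ↔ c a) :=
    side.iff_congr_of_reachable (c.comp (Embedding.induce _).toHom) hua
  simpa using key

theorem IsIndepSet.symmDiff_componentIn {S T : Finset V} (hS : G.IsIndepSet S)
    (hT : G.IsIndepSet T) (u : V) : G.IsIndepSet ↑(S ∆ G.componentIn (S ∆ T) u) := by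
  set K := G.componentIn (S ∆ T) u
  have hKT : ∀ b ∈ K, b ∉ S → b ∈ T := fun b hb hbS => by
    have := componentIn_subset hb
    rw [mem_symmDiff] at this
    tauto
  -- an edge from `S \ K` to `K \ S` would have to lie inside `T`, or else extend `K`
  have hcross : ∀ a b, a ∈ S → a ∉ K → b ∈ K → b ∉ S → ¬ G.Adj a b := by
    intro a b haS haK hbK hbS hab
    by_cases haT : a ∈ T
    · exact hT (mem_coe.2 haT) (mem_coe.2 (hKT b hbK hbS)) hab.ne hab
    · exact haK (mem_componentIn_of_adj hbK (mem_symmDiff.2 (.inl ⟨haS, haT⟩)) hab.symm)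
  intro a ha b hb hne hab
  rw [mem_coe, mem_symmDiff] at ha hb
  rcases ha with ⟨haS, haK⟩ | ⟨haK, haS⟩ <;> rcases hb with ⟨hbS, hbK⟩ | ⟨hbK, hbS⟩
  · exact hS (mem_coe.2 haS) (mem_coe.2 hbS) hne hab
  · exact hcross a b haS haK hbK hbS hab
  · exact hcross b a hbS hbK haK haS hab.symm
  · exact hT (mem_coe.2 (hKT a haK haS)) (mem_coe.2 (hKT b hbK hbS)) hne hab

end componentIn

section kempeSwap

variable (G) in
noncomputable def kempeSwap (u : V) (x : Finset V × Finset V) : Finset V × Finset V :=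
  (x.1 ∆ G.componentIn (x.1 ∆ x.2) u, x.2 ∆ G.componentIn (x.1 ∆ x.2) u)

variable {u : V} {x : Finset V × Finset V}

theorem symmDiff_kempeSwap : (G.kempeSwap u x).1 ∆ (G.kempeSwap u x).2 = x.1 ∆ x.2 := by
  rw [kempeSwap, symmDiff_symmDiff_symmDiff_comm, symmDiff_self, symmDiff_bot]

theorem kempeSwap_kempeSwap : G.kempeSwap u (G.kempeSwap u x) = x := by
  conv_lhs => rw [kempeSwap, symmDiff_kempeSwap]
  simp only [kempeSwap, symmDiff_symmDiff_cancel_right]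

theorem isIndepSet_kempeSwap (h₁ : G.IsIndepSet x.1) (h₂ : G.IsIndepSet x.2) :
    G.IsIndepSet (G.kempeSwap u x).1 ∧ G.IsIndepSet (G.kempeSwap u x).2 := by
  refine ⟨h₁.symmDiff_componentIn h₂ u, ?_⟩
  simpa only [kempeSwap, symmDiff_comm x.1 x.2] using h₂.symmDiff_componentIn h₁ u

end kempeSwap

section Counting

variable [Fintype V]

variable (G) in
noncomputable def indepPairs : Finset (Finset V × Finset V) :=
  {x | G.IsIndepSet x.1 ∧ G.IsIndepSet x.2}

theorem sigmaDel_eq_card (W : Set V) :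
    sigmaDel G W = #{s : Finset V | G.IsIndepSet s ∧ ∀ y ∈ s, y ∉ W} := by
  refine congrArg card (filter_congr fun s _ => ?_)
  have : (∀ a ∈ s, ∀ b ∈ s, ¬G.Adj a b) ↔ G.IsIndepSet s :=
    ⟨fun h a ha b hb _ => h a ha b hb, fun h a ha b hb hab => h ha hb hab.ne hab⟩
  rw [this, and_comm]

theorem sigmaDel_mul_sigmaDel (W₁ W₂ : Set V) :
    sigmaDel G W₁ * sigmaDel G W₂ =
      #{x ∈ G.indepPairs | Disjoint (x.1 : Set V) W₁ ∧ Disjoint (x.2 : Set V) W₂} := by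
  rw [sigmaDel_eq_card, sigmaDel_eq_card, ← card_product, ← filter_product, indepPairs,
    filter_filter, univ_product_univ]
  refine congrArg card (filter_congr fun x _ => ?_)
  simp only [Set.disjoint_left, mem_coe]
  tauto

/- The pairs `(S, T)` left over by the Kempe swap at `u`: `v` lies in the component of `u` in
`G[S ∆ T]`. -/
variable (G) in
noncomputable def linkedSame (u v : V) : Finset (Finset V × Finset V) :=
  {x ∈ G.indepPairs | u ∈ x.1 ∧ u ∉ x.2 ∧ v ∉ x.2 ∧ v ∈ G.componentIn (x.1 ∆ x.2) u}

variable (G) in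
noncomputable def linkedCross (u v : V) : Finset (Finset V × Finset V) :=
  {x ∈ G.indepPairs | u ∉ x.1 ∧ u ∈ x.2 ∧ v ∉ x.2 ∧ v ∈ G.componentIn (x.1 ∆ x.2) u}

variable {u v : V}

theorem card_unlinked_eq :
    #{x ∈ G.indepPairs | u ∈ x.1 ∧ u ∉ x.2 ∧ v ∉ x.2 ∧ v ∉ G.componentIn (x.1 ∆ x.2) u} =
      #{x ∈ G.indepPairs | u ∉ x.1 ∧ u ∈ x.2 ∧ v ∉ x.2 ∧ v ∉ G.componentIn (x.1 ∆ x.2) u} := by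
  refine card_nbij' (G.kempeSwap u) (G.kempeSwap u) ?_ ?_
    (fun _ _ => kempeSwap_kempeSwap) (fun _ _ => kempeSwap_kempeSwap)
  all_goals
    intro x hx
    simp only [coe_filter, indepPairs, mem_filter, mem_univ, true_and, Set.mem_ofPred_eq] at hx ⊢
    obtain ⟨⟨h₁, h₂⟩, hu₁, hu₂, hv, hvK⟩ := hx
    have hu : u ∈ G.componentIn (x.1 ∆ x.2) u :=
      self_mem_componentIn (by simp [mem_symmDiff, hu₁, hu₂])
    rw [symmDiff_kempeSwap]
    refine ⟨isIndepSet_kempeSwap h₁ h₂, ?_⟩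
    simp [kempeSwap, mem_symmDiff, hu, hu₁, hu₂, hv, hvK]

theorem sigmaG_mul_add_card_linkedCross :
    sigmaG G * sigmaDel G {u, v} + #(G.linkedCross u v) =
      sigmaDel G {u} * sigmaDel G {v} + #(G.linkedSame u v) := by
  have hB : sigmaG G * sigmaDel G {u, v} =
      #{x ∈ G.indepPairs | u ∉ x.1 ∧ u ∉ x.2 ∧ v ∉ x.2} +
      #{x ∈ G.indepPairs | u ∈ x.1 ∧ u ∉ x.2 ∧ v ∉ x.2 ∧ v ∉ G.componentIn (x.1 ∆ x.2) u} +
      #(G.linkedSame u v) := by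
    rw [sigmaG, sigmaDel_mul_sigmaDel, linkedSame]
    refine card_filter_eq_add_add (fun x _ => ?_) (fun x _ => ?_) (fun x _ => ?_)
    · simp only [Set.disjoint_empty, Set.disjoint_insert_right, Set.disjoint_singleton_right,
        mem_coe]
      tauto
    all_goals tauto
  have hA : sigmaDel G {u} * sigmaDel G {v} =
      #{x ∈ G.indepPairs | u ∉ x.1 ∧ u ∉ x.2 ∧ v ∉ x.2} +
      #{x ∈ G.indepPairs | u ∉ x.1 ∧ u ∈ x.2 ∧ v ∉ x.2 ∧ v ∉ G.componentIn (x.1 ∆ x.2) u} +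
      #(G.linkedCross u v) := by
    rw [sigmaDel_mul_sigmaDel, linkedCross]
    refine card_filter_eq_add_add (fun x _ => ?_) (fun x _ => ?_) (fun x _ => ?_)
    · simp only [Set.disjoint_singleton_right, mem_coe]
      tauto
    all_goals tauto
  rw [hB, hA, card_unlinked_eq]
  ring

variable (c : G.Coloring Bool)

theorem mem_fst_iff_of_mem_componentIn {x : Finset V × Finset V} (hx : x ∈ G.indepPairs)
    (hv : v ∉ x.2) (hvK : v ∈ G.componentIn (x.1 ∆ x.2) u) : u ∈ x.1 ↔ (c u ↔ c v) := by
  simp only [indepPairs, mem_filter, mem_univ, true_and] at hx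
  have hv₁ : v ∈ x.1 := by
    have := componentIn_subset hvK
    rw [mem_symmDiff] at this
    tauto
  rw [← mem_iff_mem_iff_of_mem_componentIn c hx.1 hx.2 hvK]
  tauto

theorem linkedCross_eq_empty (h : c u ↔ c v) : G.linkedCross u v = ∅ :=
  filter_eq_empty_iff.2 fun _ hx ⟨hu₁, _, hv, hvK⟩ =>
    hu₁ ((mem_fst_iff_of_mem_componentIn c hx hv hvK).2 h)

theorem linkedSame_eq_empty (h : ¬(c u ↔ c v)) : G.linkedSame u v = ∅ :=
  filter_eq_empty_iff.2 fun _ hx ⟨hu₁, _, hv, hvK⟩ =>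
    h ((mem_fst_iff_of_mem_componentIn c hx hv hvK).1 hu₁)

theorem Walk.exists_mem_indepPairs (p : G.Walk u v) :
    ∃ x ∈ G.indepPairs, (u ∈ x.1 ↔ (c u ↔ c v)) ∧ (u ∈ x.2 ↔ ¬(c u ↔ c v)) ∧ v ∉ x.2 ∧
      v ∈ G.componentIn (x.1 ∆ x.2) u := by
  have hclass : ∀ b, G.IsIndepSet ↑({y ∈ p.support.toFinset | c y = b}) :=
    fun b y hy z hz _ hyz => c.valid hyz (by simp_all)
  have hsupp : {y ∈ p.support.toFinset | c y = c v} ∆ {y ∈ p.support.toFinset | c y = !c v} =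
      p.support.toFinset := by
    ext y
    simp only [mem_symmDiff, mem_filter]
    cases c y <;> cases c v <;> simp
  refine ⟨({y ∈ p.support.toFinset | c y = c v}, {y ∈ p.support.toFinset | c y = !c v}),
    mem_filter.2 ⟨mem_univ _, hclass _, hclass _⟩, ?_, ?_, by simp, ?_⟩
  · simp only [mem_filter, List.mem_toFinset, p.start_mem_support, true_and]
    cases c u <;> cases c v <;> simp
  · simp only [mem_filter, List.mem_toFinset, p.start_mem_support, true_and]
    cases c u <;> cases c v <;> simp
  · rw [hsupp]
    exact p.mem_componentIn (by simp)

theorem linkedSame_nonempty (p : G.Walk u v) (h : c u ↔ c v) : (G.linkedSame u v).Nonempty := by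
  obtain ⟨x, hx, hu₁, hu₂, hv, hvK⟩ := p.exists_mem_indepPairs c
  exact ⟨x, mem_filter.2 ⟨hx, hu₁.2 h, fun hu => hu₂.1 hu h, hv, hvK⟩⟩

theorem linkedCross_nonempty (p : G.Walk u v) (h : ¬(c u ↔ c v)) :
    (G.linkedCross u v).Nonempty := by
  obtain ⟨x, hx, hu₁, hu₂, hv, hvK⟩ := p.exists_mem_indepPairs c
  exact ⟨x, mem_filter.2 ⟨hx, fun hu => h (hu₁.1 hu), hu₂.2 h, hv, hvK⟩⟩

end Counting

end SimpleGraph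

theorem merrifield_simmons_bipartite {V : Type*} [Fintype V] (G : SimpleGraph V)
    (hbip : G.Colorable 2) (u v : V) (hconn : G.Reachable u v) :
    (Even (G.dist u v) →
      sigmaDel G {u} * sigmaDel G {v} < sigmaG G * sigmaDel G {u, v}) ∧
    (Odd (G.dist u v) →
      sigmaG G * sigmaDel G {u, v} < sigmaDel G {u} * sigmaDel G {v}) := by
  obtain ⟨c⟩ := hbip
  let c' : G.Coloring Bool := SimpleGraph.recolorOfEquiv G finTwoEquiv c
  obtain ⟨p, hp⟩ := hconn.exists_walk_length_eq_dist
  have hpar : Even (G.dist u v) ↔ (c' u ↔ c' v) := hp ▸ c'.even_length_iff_congr p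
  have key := G.sigmaG_mul_add_card_linkedCross (u := u) (v := v)
  refine ⟨fun heven => ?_, fun hodd => ?_⟩
  · have hc := hpar.1 heven
    have := (SimpleGraph.linkedSame_nonempty c' p hc).card_pos
    rw [SimpleGraph.linkedCross_eq_empty c' hc, Finset.card_empty] at key
    omega
  · have hc := hpar.not.1 (Nat.not_even_iff_odd.2 hodd)
    have := (SimpleGraph.linkedCross_nonempty c' p hc).card_pos
    rw [SimpleGraph.linkedSame_eq_empty c' hc, Finset.card_empty] at key
    omega
end

section
/- Let G = (V,E) be a finite simple graph, A, B ⊆ V two vertex subsets, and C = A ∩ B nonempty. Then σ(G₋A)·σ(G₋B) − σ(G)·σ(G₋A₋B) < σ(G₋C₋(A\C))·σ(G₋C₋(B\C)) − σ(G₋C)·σ(G₋C₋(A\C)₋(B\C)), that is, Δ(G,A,B) < Δ(G₋C, A\C, B\C). -/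
open scoped Classical

theorem delta_lt_delta_del_inter {V : Type*} [Fintype V] (G : SimpleGraph V)
    (A B : Set V) (hC : (A ∩ B).Nonempty) :
    -- `Δ(G, A, B) < Δ(G₋C, A\C, B\C)` where `C = A ∩ B`; note that
    -- `σ(G₋C₋(A\C)) = σ(G₋A)`, `σ(G₋C₋(B\C)) = σ(G₋B)` and `σ(G₋C₋(A\C)₋(B\C)) = σ(G₋A₋B)`.
    (sigmaDel G A : ℤ) * sigmaDel G B - (sigmaG G : ℤ) * sigmaDel G (A ∪ B) <
      (sigmaDel G A : ℤ) * sigmaDel G B - (sigmaDel G (A ∩ B) : ℤ) * sigmaDel G (A ∪ B) := by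
  obtain ⟨c, hcA, hcB⟩ := hC
  have hpos : 0 < sigmaDel G (A ∪ B) := by
    rw [sigmaDel, Finset.card_pos]
    exact ⟨∅, by simp⟩
  have hlt : sigmaDel G (A ∩ B) < sigmaG G := by
    rw [sigmaDel, sigmaG, sigmaDel]
    apply Finset.card_lt_card
    rw [Finset.ssubset_iff_of_subset]
    · refine ⟨{c}, ?_, ?_⟩
      · simp only [Finset.mem_filter, Finset.mem_singleton]
        refine ⟨Finset.mem_univ _, fun v _ => Set.notMem_empty v, ?_⟩
        intro u hu v hv
        subst hu; subst hv; exact G.loopless.irrefl _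
      · simp only [Finset.mem_filter, Finset.mem_singleton]
        intro h
        exact h.2.1 c rfl ⟨hcA, hcB⟩
    · intro s hs
      simp only [Finset.mem_filter] at hs ⊢
      exact ⟨hs.1, fun v _ => Set.notMem_empty v, hs.2.2⟩
  have := Nat.mul_lt_mul_of_lt_of_le hlt (le_refl (sigmaDel G (A ∪ B))) hpos
  omega
end

section
/- Let G = (V,E) be a finite simple graph and A, B ⊆ V disjoint subsets with no edge between A and B. Then σ(G₋A)·σ(G₋B) − σ(G)·σ(G₋A₋B) = − Σ_{W ⊆ A, W independent} [ σ(G₋A₋N(W))·σ(G₋A₋B) − σ(G₋A)·σ(G₋A₋N(W)₋B) ], where N(W) = N_G(W). -/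
/-!
Sort the independent sets `s` of `G₋C` by their trace `W = s ∩ A`: when `A` avoids `C`, those
with trace `W` are exactly the sets `W ∪ t` with `t` independent in `G₋A₋N(W)₋C`, so
`σ(G₋C) = Σ_W σ(G₋A₋N(W)₋C)`. Taking `C = ∅` and `C = B` expands `σ(G)` and `σ(G₋B)` as
sums over the independent `W ⊆ A`, and the identity becomes a rearrangement of finite sums.
-/

open scoped Classical

open Finset

section

variable {V : Type*} [Fintype V] (G : SimpleGraph V)

lemma card_indep_inter_eq_sigmaDel {A : Finset V} {C : Set V} (hAC : Disjoint (A : Set V) C)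
    {W : Finset V} (hWA : W ⊆ A) (hW : ∀ u ∈ W, ∀ v ∈ W, ¬ G.Adj u v) :
    #{s ∈ {s : Finset V | (∀ v ∈ s, v ∉ C) ∧ ∀ u ∈ s, ∀ v ∈ s, ¬ G.Adj u v} | s ∩ A = W} =
      sigmaDel G ((A : Set V) ∪ {x | ∃ w ∈ W, G.Adj w x} ∪ C) := by
  symm
  apply card_nbij' (fun t => W ∪ t) (fun s => s \ A)
  · intro t ht
    simp only [coe_filter, mem_filter, mem_univ, true_and, Set.mem_ofPred_eq, Set.mem_union,
      mem_coe, not_or] at ht ⊢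
    obtain ⟨htAvoid, htIndep⟩ := ht
    refine ⟨⟨fun v hv => ?_, fun u hu v hv => ?_⟩, ?_⟩
    · grind
    · rcases mem_union.1 hu with hu | hu <;> rcases mem_union.1 hv with hv | hv
      · exact hW u hu v hv
      · exact fun huv => (htAvoid v hv).1.2 ⟨u, hu, huv⟩
      · exact fun huv => (htAvoid u hu).1.2 ⟨v, hv, huv.symm⟩
      · exact htIndep u hu v hv
    · grind
  · intro s hs
    simp only [coe_filter, mem_filter, mem_univ, true_and, Set.mem_ofPred_eq, Set.mem_union,
      mem_coe, not_or, mem_sdiff] at hs ⊢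
    obtain ⟨⟨hsAvoid, hsIndep⟩, rfl⟩ := hs
    refine ⟨fun v hv => ⟨⟨hv.2, ?_⟩, hsAvoid v hv.1⟩, fun u hu v hv => hsIndep u hu.1 v hv.1⟩
    rintro ⟨w, hw, hwv⟩
    exact hsIndep w (mem_inter.1 hw).1 v hv.1 hwv
  · intro t ht
    simp only [coe_filter, mem_univ, true_and, Set.mem_ofPred_eq, Set.mem_union, mem_coe] at ht
    grind
  · intro s hs
    simp only [coe_filter, mem_filter] at hs
    grind

lemma sigmaDel_eq_sum_sigmaDel_union {A : Finset V} {C : Set V} (hAC : Disjoint (A : Set V) C) :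
    sigmaDel G C = ∑ W ∈ A.powerset.filter (fun W => ∀ u ∈ W, ∀ v ∈ W, ¬ G.Adj u v),
      sigmaDel G ((A : Set V) ∪ {x | ∃ w ∈ W, G.Adj w x} ∪ C) := by
  rw [sigmaDel, card_eq_sum_card_fiberwise (f := fun s => s ∩ A)]
  · refine sum_congr rfl fun W hW => ?_
    rw [mem_filter, mem_powerset] at hW
    exact card_indep_inter_eq_sigmaDel G hAC hW.1 hW.2
  · intro s hs
    rw [mem_coe, mem_filter] at hs
    rw [mem_coe, mem_filter, mem_powerset]
    refine ⟨inter_subset_right, ?_⟩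
    exact fun u hu v hv => hs.2.2 u (mem_inter.1 hu).1 v (mem_inter.1 hv).1

end

theorem delta_sum_expansion_general {V : Type*} [Fintype V] (G : SimpleGraph V)
    (A B : Finset V) (hdisj : Disjoint A B) :
    (sigmaDel G ↑A : ℤ) * sigmaDel G ↑B - (sigmaG G : ℤ) * sigmaDel G (↑A ∪ ↑B) =
      - ∑ W ∈ A.powerset.filter (fun W => ∀ u ∈ W, ∀ v ∈ W, ¬ G.Adj u v),
          ((sigmaDel G ((A : Set V) ∪ {x | ∃ w ∈ W, G.Adj w x}) : ℤ) *
              sigmaDel G ((A : Set V) ∪ ↑B) -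
            (sigmaDel G ↑A : ℤ) *
              sigmaDel G ((A : Set V) ∪ {x | ∃ w ∈ W, G.Adj w x} ∪ ↑B)) := by
  have hG := sigmaDel_eq_sum_sigmaDel_union G (A := A) (Set.disjoint_empty _)
  have hB := sigmaDel_eq_sum_sigmaDel_union G (disjoint_coe.mpr hdisj)
  simp only [Set.union_empty] at hG
  rw [sigmaG, hG, hB]
  push_cast
  rw [mul_sum, sum_mul, ← sum_sub_distrib, ← sum_neg_distrib]
  exact sum_congr rfl fun _ _ => by ring

theorem delta_sum_expansion {V : Type*} [Fintype V] (G : SimpleGraph V)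
    (A B : Finset V) (hdisj : Disjoint A B)
    (hnoedge : ∀ a ∈ A, ∀ b ∈ B, ¬ G.Adj a b) :
    (sigmaDel G ↑A : ℤ) * sigmaDel G ↑B - (sigmaG G : ℤ) * sigmaDel G (↑A ∪ ↑B) =
      - ∑ W ∈ A.powerset.filter (fun W => ∀ u ∈ W, ∀ v ∈ W, ¬ G.Adj u v),
          ((sigmaDel G ((A : Set V) ∪ {x | ∃ w ∈ W, G.Adj w x}) : ℤ) *
              sigmaDel G ((A : Set V) ∪ ↑B) -
            (sigmaDel G ↑A : ℤ) *
              sigmaDel G ((A : Set V) ∪ {x | ∃ w ∈ W, G.Adj w x} ∪ ↑B)) :=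
  delta_sum_expansion_general G A B hdisj
end

section
/- Let P_n denote the path graph on n vertices v₁,…,v_n, and let u = v_i, v = v_j with i < j. If j − i is even then σ(P_n₋ᵤ)·σ(P_n₋ᵥ) < σ(P_n)·σ(P_n₋ᵤ₋ᵥ), and if j − i is odd then σ(P_n₋ᵤ)·σ(P_n₋ᵥ) > σ(P_n)·σ(P_n₋ᵤ₋ᵥ). -/
open scoped Classical

/-!
Deleting vertices cuts a path into shorter paths, and `σ(P_m) = F(m + 2)`, so all four counts
are products of Fibonacci numbers. With vertices indexed from `0`, the difference
`σ(P_n₋ᵤ) σ(P_n₋ᵥ) - σ(P_n) σ(P_n₋ᵤ₋ᵥ)` is `F(i + 2) F(n - j + 1)` times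
`F(j + 2) F(n - i + 1) - F(j - i + 1) F(n + 2)`, and Vajda's identity
`F(m + a) F(m + b) - F(m) F(m + a + b) = (-1)^m F(a) F(b)` with `m = j - i + 1`, `a = i + 1`,
`b = n - j` evaluates the latter as `(-1)^(j - i + 1) F(i + 1) F(n - j)`.
-/

/-- **Vajda's identity** -/
theorem Int.fib_add_mul_fib_add_sub_fib_mul_fib_add_add (m a b : ℤ) :
    fib (m + a) * fib (m + b) - fib m * fib (m + a + b) = (-1) ^ m.natAbs * fib a * fib b := by
  have hm : fib (m + 1) = fib (m - 1) + fib m := by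
    simpa [sub_add_cancel, show m - 1 + 2 = m + 1 by ring] using fib_add_two (m - 1)
  have ha : fib (a + 1) = fib (a - 1) + fib a := by
    simpa [sub_add_cancel, show a - 1 + 2 = a + 1 by ring] using fib_add_two (a - 1)
  have hb : fib (b + 1 + 1) = fib b + fib (b + 1) := by
    rw [add_assoc, one_add_one_eq_two, fib_add_two]
  rw [← fib_succ_mul_fib_pred_sub_fib_sq m, add_assoc m a b, fib_add m a, fib_add m b,
    fib_add m (a + b), fib_add a b, add_assoc a b 1, fib_add a (b + 1)]
  linear_combination (fib (m - 1) * fib m * fib b + fib m ^ 2 * fib (b + 1)) * ha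
    - fib m ^ 2 * fib a * hb - fib (m - 1) * fib a * fib b * hm

theorem eq_of_fib_recurrence {f g : ℕ → ℕ} (hf : ∀ k, f (k + 2) = f k + f (k + 1))
    (hg : ∀ k, g (k + 2) = g k + g (k + 1)) (h0 : f 0 = g 0) (h1 : f 1 = g 1) : f = g :=
  funext <| Nat.twoStepInduction h0 h1 fun k hk hk' => by rw [hf, hg, hk, hk']

open Finset

theorem card_filter_powerset_range_succ (p : Finset ℕ → Prop) [DecidablePred p] (n : ℕ) :
    #{s ∈ (range (n + 1)).powerset | p s} =
      #{s ∈ (range n).powerset | p s} + #{s ∈ (range n).powerset | p (insert n s)} := by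
  simp only [card_filter, range_add_one, sum_powerset_insert notMem_range_self]

/-- `s` is an independent set of the path `0 - 1 - 2 - ⋯` on `ℕ` with the vertices `W` deleted;
`sparseCount W n` below is then `σ(P_n₋W)`. -/
def IsSparseOff (W s : Finset ℕ) : Prop :=
  (∀ a ∈ s, a ∉ W) ∧ ∀ a ∈ s, a + 1 ∉ s

theorem isSparseOff_insert_iff {W s : Finset ℕ} {m : ℕ} (hs : ∀ a ∈ s, a + 1 < m)
    (hm : m ∉ W) : IsSparseOff W (insert m s) ↔ IsSparseOff W s := by
  simp only [IsSparseOff, mem_insert]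
  grind

noncomputable def sparseCount (W : Finset ℕ) (n : ℕ) : ℕ :=
  #{s ∈ (range n).powerset | IsSparseOff W s}

theorem sparseCount_zero (W : Finset ℕ) : sparseCount W 0 = 1 := by
  rw [sparseCount, range_zero, powerset_empty, filter_true_of_mem, card_singleton]
  simp [IsSparseOff]

theorem sparseCount_succ (W : Finset ℕ) (n : ℕ) :
    sparseCount W (n + 1) =
      sparseCount W n + #{s ∈ (range n).powerset | IsSparseOff W (insert n s)} :=
  card_filter_powerset_range_succ _ n

theorem sparseCount_succ_of_mem {W : Finset ℕ} {n : ℕ} (h : n ∈ W) :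
    sparseCount W (n + 1) = sparseCount W n := by
  rw [sparseCount_succ, add_eq_left, card_eq_zero, filter_eq_empty_iff]
  exact fun s _ hs => hs.1 n (mem_insert_self n s) h

theorem sparseCount_add_two {W : Finset ℕ} {n : ℕ} (h : n + 1 ∉ W) :
    sparseCount W (n + 2) = sparseCount W n + sparseCount W (n + 1) := by
  have hlast : #{s ∈ (range n).powerset | IsSparseOff W (insert (n + 1) (insert n s))} = 0 :=
    card_eq_zero.2 (filter_false_of_mem fun s _ hs => hs.2 n (by simp) (by simp))
  have hmid : #{s ∈ (range n).powerset | IsSparseOff W (insert (n + 1) s)} = sparseCount W n :=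
    congrArg card <| filter_congr fun s hs =>
      isSparseOff_insert_iff (fun a ha => by simpa using mem_powerset.1 hs ha) h
  rw [sparseCount_succ,
    card_filter_powerset_range_succ (fun s => IsSparseOff W (insert (n + 1) s)), hmid, hlast,
    add_zero, add_comm]

theorem sparseCount_insert_of_le (W : Finset ℕ) {m n : ℕ} (h : n ≤ m) :
    sparseCount (insert m W) n = sparseCount W n := by
  refine congrArg card (filter_congr fun s hs => ?_)
  have : ∀ a ∈ s, a < n := fun a ha => mem_range.1 (mem_powerset.1 hs ha)
  simp only [IsSparseOff, mem_insert]
  grind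

theorem sparseCount_empty (n : ℕ) : sparseCount ∅ n = Nat.fib (n + 2) := by
  refine congrFun (eq_of_fib_recurrence (fun k => sparseCount_add_two (notMem_empty _))
    (g := fun k => Nat.fib (k + 2)) (fun k => Nat.fib_add_two) ?_ ?_) n
  · exact sparseCount_zero ∅
  · rw [sparseCount_succ, sparseCount_zero, range_zero, powerset_empty, filter_true_of_mem,
      card_singleton]
    · rfl
    · simp [IsSparseOff]

/-- Past a deleted vertex `m` the count starts afresh, as for a path beginning at `m + 1`. -/
theorem sparseCount_insert_add {W : Finset ℕ} {m : ℕ} (hW : ∀ a ∈ W, a < m) (k : ℕ) :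
    sparseCount (insert m W) (m + k) = sparseCount W m * Nat.fib (k + 1) := by
  have hm : sparseCount (insert m W) m = sparseCount W m := sparseCount_insert_of_le W le_rfl
  refine congrFun (eq_of_fib_recurrence (f := fun k => sparseCount (insert m W) (m + k))
    (g := fun k => sparseCount W m * Nat.fib (k + 1))
    (fun k => sparseCount_add_two ?_) (fun k => ?_) ?_ ?_) k
  · grind
  · simp only [Nat.fib_add_two]; ring
  · simpa using hm
  · simpa [Nat.fib_two] using (sparseCount_succ_of_mem (mem_insert_self m W)).trans hm

theorem sparseCount_singleton {i n : ℕ} (h : i ≤ n) :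
    sparseCount {i} n = Nat.fib (i + 2) * Nat.fib (n - i + 1) := by
  have := sparseCount_insert_add (W := ∅) (m := i) (by simp) (n - i)
  rwa [insert_empty, Nat.add_sub_cancel' h, sparseCount_empty] at this

open SimpleGraph

theorem sigmaDel_pathGraph_eq_sparseCount (n : ℕ) (W : Finset ℕ) :
    sigmaDel (pathGraph n) (Fin.val ⁻¹' W) = sparseCount W n := by
  rw [sparseCount, ← image_fin_univ, powerset_image, powerset_univ, filter_image,
    card_image_of_injective _ (image_injective Fin.val_injective), sigmaDel]
  congr 1
  ext s
  simp only [Set.mem_preimage, SetLike.mem_coe, pathGraph_adj, not_or, mem_filter, mem_univ,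
    true_and, IsSparseOff, mem_image, forall_exists_index, and_imp, forall_apply_eq_imp_iff₂,
    not_exists, not_and, and_congr_right_iff]
  exact fun _ => ⟨fun h u hu v hv e => (h u hu v hv).1 e.symm,
    fun h u hu v hv => ⟨fun e => h u hu v hv e.symm, fun e => h v hv u hu e.symm⟩⟩

theorem sigmaG_pathGraph (n : ℕ) : sigmaG (pathGraph n) = Nat.fib (n + 2) := by
  have := sigmaDel_pathGraph_eq_sparseCount n ∅
  rwa [coe_empty, Set.preimage_empty, sparseCount_empty] at this

theorem sigmaDel_pathGraph_singleton {n : ℕ} (i : Fin n) :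
    sigmaDel (pathGraph n) {i} = Nat.fib (i + 2) * Nat.fib (n - i + 1) := by
  have hW : ({i} : Set (Fin n)) = Fin.val ⁻¹' ({(i : ℕ)} : Finset ℕ) := by
    ext; simp [Fin.ext_iff]
  rw [hW, sigmaDel_pathGraph_eq_sparseCount, sparseCount_singleton i.is_lt.le]

theorem sigmaDel_pathGraph_pair {n : ℕ} {i j : Fin n} (hij : i < j) :
    sigmaDel (pathGraph n) {i, j} =
      Nat.fib (i + 2) * Nat.fib (j - i + 1) * Nat.fib (n - j + 1) := by
  have hW : ({i, j} : Set (Fin n)) = Fin.val ⁻¹' (insert (j : ℕ) {(i : ℕ)} : Finset ℕ) := by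
    ext; simp [Fin.ext_iff, or_comm]
  have := sparseCount_insert_add (W := {(i : ℕ)}) (m := j) (by simpa using hij) (n - j)
  rwa [Nat.add_sub_cancel' j.is_lt.le, sparseCount_singleton (Fin.le_iff_val_le_val.1 hij.le),
    ← sigmaDel_pathGraph_eq_sparseCount, ← hW] at this

theorem sigmaDel_pathGraph_mul_sub {n : ℕ} {i j : Fin n} (hij : i < j) :
    (sigmaDel (pathGraph n) {i} * sigmaDel (pathGraph n) {j} : ℤ) -
        sigmaG (pathGraph n) * sigmaDel (pathGraph n) {i, j} =
      (-1) ^ ((j : ℕ) - i + 1) *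
        (Nat.fib (i + 1) * Nat.fib (i + 2) * Nat.fib (n - j) * Nat.fib (n - j + 1)) := by
  have hij' : (i : ℕ) < j := hij
  have hjn := j.is_lt
  have vajda := Int.fib_add_mul_fib_add_sub_fib_mul_fib_add_add ((j : ℕ) - i + 1 : ℕ)
    (i + 1 : ℕ) (n - j : ℕ)
  simp only [← Nat.cast_add, Int.fib_natCast, Int.natAbs_natCast] at vajda
  rw [show (j : ℕ) - i + 1 + (i + 1) + (n - j) = n + 2 by omega,
    show (j : ℕ) - i + 1 + (i + 1) = j + 2 by omega,
    show (j : ℕ) - i + 1 + (n - j) = n - i + 1 by omega] at vajda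
  rw [sigmaDel_pathGraph_singleton, sigmaDel_pathGraph_singleton, sigmaG_pathGraph,
    sigmaDel_pathGraph_pair hij]
  push_cast
  linear_combination (Nat.fib (i + 2) * Nat.fib (n - j + 1) : ℤ) * vajda

theorem merrifield_simmons_pathGraph (n : ℕ) (i j : Fin n) (hij : i < j) :
    (Even ((j : ℕ) - (i : ℕ)) →
      sigmaDel (SimpleGraph.pathGraph n) {i} * sigmaDel (SimpleGraph.pathGraph n) {j} <
        sigmaG (SimpleGraph.pathGraph n) * sigmaDel (SimpleGraph.pathGraph n) {i, j}) ∧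
    (Odd ((j : ℕ) - (i : ℕ)) →
      sigmaG (SimpleGraph.pathGraph n) * sigmaDel (SimpleGraph.pathGraph n) {i, j} <
        sigmaDel (SimpleGraph.pathGraph n) {i} * sigmaDel (SimpleGraph.pathGraph n) {j}) := by
  have hpos :
      (0 : ℤ) < Nat.fib (i + 1) * Nat.fib (i + 2) * Nat.fib (n - j) * Nat.fib (n - j + 1) := by
    have := j.is_lt
    norm_cast
    simp only [CanonicallyOrderedAdd.mul_pos, Nat.fib_pos]
    omega
  have key := sigmaDel_pathGraph_mul_sub hij
  refine ⟨fun h => ?_, fun h => ?_⟩ <;> rw [h.add_one.neg_one_pow] at key <;> zify <;> linarith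
end
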